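/- arXiv:1005.5288 — 3 statements merged into one kernel-verified Lean document; each statement's English description precedes it below -/
import Mathlib

section
/- If the sequence of functions φ_n(t) satisfies the discrete linear wave equation ∂_t φ_n = (φ_{n+1} - φ_{n-1})/(2h), and u_n(t) is defined by the discrete Cole–Hopf transformation u_n = (φ_{n+1} - φ_n)/(h φ_n) with φ_n(t) ≠ 0 and 1 + h u_{n-1}(t) ≠ 0 for all n, then u_n satisfies the differential-difference Burgers equation ∂_t u_n = (1/(2h)) [ (1 + h u_n)(u_{n+1} - u_n) - (u_{n-1} - u_n)/(1 + h u_{n-1}) ]. -/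
/-!
Writing `ρ_n = φ_{n+1} / φ_n`, the transformation reads `1 + h u_n = ρ_n`, so it suffices to
derive the equation for `ρ`. By the quotient rule and the wave equation for `φ_n` and `φ_{n+1}`,
`2h ρ_n' = (φ_{n+2} - φ_n) / φ_n - ρ_n (φ_{n+1} - φ_{n-1}) / φ_n = ρ_n (ρ_{n+1} - ρ_n) - (1 - ρ_n / ρ_{n-1})`,
which becomes the Burgers equation after substituting `ρ = 1 + h u`.
-/

noncomputable def succRatio (φ : ℤ → ℝ → ℝ) (n : ℤ) (t : ℝ) : ℝ := φ (n + 1) t / φ n t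

theorem hasDerivAt_succRatio {h : ℝ} {φ : ℤ → ℝ → ℝ} (hφne : ∀ (n : ℤ) (t : ℝ), φ n t ≠ 0)
    (hwave : ∀ (n : ℤ) (t : ℝ),
      HasDerivAt (φ n) ((φ (n + 1) t - φ (n - 1) t) / (2 * h)) t) (n : ℤ) (t : ℝ) :
    HasDerivAt (succRatio φ n)
      ((1 / (2 * h)) * (succRatio φ n t * (succRatio φ (n + 1) t - succRatio φ n t)
        - (succRatio φ (n - 1) t - succRatio φ n t) / succRatio φ (n - 1) t)) t := by
  have hwave_succ : HasDerivAt (φ (n + 1)) ((φ (n + 2) t - φ n t) / (2 * h)) t := by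
    simpa [add_assoc, one_add_one_eq_two] using hwave (n + 1) t
  refine (hwave_succ.div (hwave n t) (hφne n t)).congr_deriv ?_
  have hφ := hφne n t
  have hφ_succ := hφne (n + 1) t
  have hφ_pred := hφne (n - 1) t
  simp only [succRatio, sub_add_cancel, add_assoc, one_add_one_eq_two]
  field_simp
  ring

theorem coleHopf_eq_succRatio {h : ℝ} (hh : h ≠ 0) {φ : ℤ → ℝ → ℝ} {n : ℤ} {t : ℝ}
    (hφ : φ n t ≠ 0) :
    (φ (n + 1) t - φ n t) / (h * φ n t) = (succRatio φ n t - 1) / h := by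
  unfold succRatio
  field_simp

theorem cole_hopf_linearizes_burgers_general
    (h : ℝ) (hh : 0 < h) (φ : ℤ → ℝ → ℝ)
    (hφne : ∀ (n : ℤ) (t : ℝ), φ n t ≠ 0)
    (u : ℤ → ℝ → ℝ)
    (hu : ∀ (n : ℤ) (t : ℝ), u n t = (φ (n + 1) t - φ n t) / (h * φ n t))
    (hwave : ∀ (n : ℤ) (t : ℝ),
      HasDerivAt (φ n) ((φ (n + 1) t - φ (n - 1) t) / (2 * h)) t) :
    ∀ (n : ℤ) (t : ℝ),
      HasDerivAt (u n)
        ((1 / (2 * h)) * ((1 + h * u n t) * (u (n + 1) t - u n t)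
          - (u (n - 1) t - u n t) / (1 + h * u (n - 1) t))) t := by
  intro n t
  have hu_ratio : ∀ m, u m = fun s => (succRatio φ m s - 1) / h := fun m =>
    funext fun s => (hu m s).trans (coleHopf_eq_succRatio hh.ne' (hφne m s))
  simp only [hu_ratio]
  refine (((hasDerivAt_succRatio hφne hwave n t).sub_const 1).div_const h).congr_deriv ?_
  have hρ_pred : succRatio φ (n - 1) t ≠ 0 :=
    div_ne_zero (by simpa using hφne n t) (hφne (n - 1) t)
  simp only [mul_div_cancel₀ _ hh.ne', add_sub_cancel]
  field_simp
  ring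

/-- Discrete Cole–Hopf: if φ satisfies the discrete linear wave equation and
u_n = (φ_{n+1} - φ_n)/(h φ_n), then u satisfies the differential-difference
Burgers equation. -/
theorem cole_hopf_linearizes_burgers
    (h : ℝ) (hh : 0 < h) (φ : ℤ → ℝ → ℝ)
    (hφdiff : ∀ n : ℤ, Differentiable ℝ (φ n))
    (hφne : ∀ (n : ℤ) (t : ℝ), φ n t ≠ 0)
    (u : ℤ → ℝ → ℝ)
    (hu : ∀ (n : ℤ) (t : ℝ), u n t = (φ (n + 1) t - φ n t) / (h * φ n t))
    (hden : ∀ (n : ℤ) (t : ℝ), 1 + h * u (n - 1) t ≠ 0)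
    (hwave : ∀ (n : ℤ) (t : ℝ),
      HasDerivAt (φ n) ((φ (n + 1) t - φ (n - 1) t) / (2 * h)) t) :
    ∀ (n : ℤ) (t : ℝ),
      HasDerivAt (u n)
        ((1 / (2 * h)) * ((1 + h * u n t) * (u (n + 1) t - u n t)
          - (u (n - 1) t - u n t) / (1 + h * u (n - 1) t))) t :=
  cole_hopf_linearizes_burgers_general h hh φ hφne u hu hwave
end

section
/- Conversely, suppose u_n(t) satisfies the differential-difference Burgers equation ∂_t u_n = (1/(2h)) [ (1 + h u_n)(u_{n+1} - u_n) - (u_{n-1} - u_n)/(1 + h u_{n-1}) ], with 1 + h u_n(t) ≠ 0 for all n and t. Define φ_n(t) for n ≥ n₀ + 1 by φ_n = φ_{n₀} ∏_{j=n₀}^{n-1} (1 + h u_j), where φ_{n₀}(t) satisfies the ODE φ_{n₀}' = (1/(2h)) [ 1 + h u_{n₀} - 1/(1 + h u_{n₀-1}) ] φ_{n₀}. Then for all n ≥ n₀ + 1, φ satisfies the discrete linear wave equation ∂_t φ_n = (φ_{n+1} - φ_{n-1})/(2h). -/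
open Finset

/-!
Write `a n = 1 + h u n`, so that `φ (n + 1) = φ n * a n`. By induction on `n`, each `φ n` solves
`φ n' = (a n - 1 / a (n - 1)) φ n / (2h)`: differentiating `φ (n + 1) = φ n * a n` with the Burgers
equation for `a n`, the terms telescope to `(a (n + 1) - 1 / a n) φ (n + 1) / (2h)`. Substituting
`φ n a n = φ (n + 1)` and `φ n / a (n - 1) = φ (n - 1)` turns this into the wave equation.
-/

/-- One step of the inverse discrete Cole–Hopf transform. Here `p`, `g t`, `r` stand for
`a (n - 1)`, `a n`, `a (n + 1)`, and `g` solves the Burgers equation written in terms of `a`. -/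
theorem HasDerivAt.mul_of_discreteBurgers {c p r t : ℝ} {f g : ℝ → ℝ} (hp : p ≠ 0)
    (hg₀ : g t ≠ 0) (hf : HasDerivAt f (c * (g t - 1 / p) * f t) t)
    (hg : HasDerivAt g (c * (g t * (r - g t) - (p - g t) / p)) t) :
    HasDerivAt (fun s => f s * g s) (c * (r - 1 / g t) * (f t * g t)) t := by
  refine (hf.mul hg).congr_deriv ?_
  field_simp
  ring

theorem hasDerivAt_mul_prod_Ico_of_discreteBurgers {c : ℝ} {a : ℤ → ℝ → ℝ} {n₀ : ℤ}
    {φ₀ : ℝ → ℝ} (ha : ∀ n t, a n t ≠ 0)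
    (hburgers : ∀ n t, HasDerivAt (a n)
      (c * (a n t * (a (n + 1) t - a n t) - (a (n - 1) t - a n t) / a (n - 1) t)) t)
    (hφ₀ : ∀ t, HasDerivAt φ₀ (c * (a n₀ t - 1 / a (n₀ - 1) t) * φ₀ t) t) :
    ∀ n, n₀ ≤ n → ∀ t, HasDerivAt (fun s => φ₀ s * ∏ j ∈ Ico n₀ n, a j s)
      (c * (a n t - 1 / a (n - 1) t) * (φ₀ t * ∏ j ∈ Ico n₀ n, a j t)) t := by
  refine Int.leInduction (fun t => by simpa using hφ₀ t) (fun n hn ih t => ?_)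
  simp_rw [← prod_Ico_mul_eq_prod_Ico_add_one hn, add_sub_cancel_right]
  simpa only [mul_assoc] using
    (ih t).mul_of_discreteBurgers (ha (n - 1) t) (ha n t) (hburgers n t)

theorem burgers_to_discrete_wave_general
    (h : ℝ) (n₀ : ℤ)
    (u : ℤ → ℝ → ℝ)
    (hden : ∀ (n : ℤ) (t : ℝ), 1 + h * u n t ≠ 0)
    (hburgers : ∀ (n : ℤ) (t : ℝ),
      HasDerivAt (u n)
        ((1 / (2 * h)) * ((1 + h * u n t) * (u (n + 1) t - u n t)
          - (u (n - 1) t - u n t) / (1 + h * u (n - 1) t))) t)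
    (φ₀ : ℝ → ℝ)
    (hφ₀ : ∀ t : ℝ,
      HasDerivAt φ₀
        ((1 / (2 * h)) * (1 + h * u n₀ t - 1 / (1 + h * u (n₀ - 1) t)) * φ₀ t) t)
    (φ : ℤ → ℝ → ℝ)
    (hφ : ∀ (n : ℤ) (t : ℝ),
      φ n t = φ₀ t * ∏ j ∈ Finset.Ico n₀ n, (1 + h * u j t)) :
    ∀ (n : ℤ) (t : ℝ), n₀ + 1 ≤ n →
      HasDerivAt (φ n) ((φ (n + 1) t - φ (n - 1) t) / (2 * h)) t := by
  intro n t hn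
  have hstep : ∀ m, n₀ ≤ m → φ (m + 1) t = φ m t * (1 + h * u m t) := fun m hm => by
    rw [hφ, hφ, ← prod_Ico_mul_eq_prod_Ico_add_one hm, mul_assoc]
  have hnext := hstep n (by omega)
  have hprev := hstep (n - 1) (by omega)
  rw [sub_add_cancel] at hprev
  have hburgers_one_add : ∀ m t, HasDerivAt (fun s => 1 + h * u m s) ((1 / (2 * h)) *
      ((1 + h * u m t) * (1 + h * u (m + 1) t - (1 + h * u m t))
        - (1 + h * u (m - 1) t - (1 + h * u m t)) / (1 + h * u (m - 1) t))) t :=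
    fun m t => (((hburgers m t).const_mul h).const_add 1).congr_deriv (by ring)
  have hode := hasDerivAt_mul_prod_Ico_of_discreteBurgers hden hburgers_one_add hφ₀ n (by omega) t
  rw [show φ n = _ from funext (hφ n)]
  refine hode.congr_deriv ?_
  rw [← hφ, hnext, hprev]
  field_simp [hden (n - 1) t]

/-- Inverse Cole–Hopf: if u satisfies the differential-difference Burgers equation
and φ is defined by the product formula from a solution φ₀ of the stated ODE,
then φ satisfies the discrete linear wave equation for n ≥ n₀ + 1. -/
theorem burgers_to_discrete_wave
    (h : ℝ) (hh : 0 < h) (n₀ : ℤ)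
    (u : ℤ → ℝ → ℝ)
    (hudiff : ∀ n : ℤ, Differentiable ℝ (u n))
    (hden : ∀ (n : ℤ) (t : ℝ), 1 + h * u n t ≠ 0)
    (hburgers : ∀ (n : ℤ) (t : ℝ),
      HasDerivAt (u n)
        ((1 / (2 * h)) * ((1 + h * u n t) * (u (n + 1) t - u n t)
          - (u (n - 1) t - u n t) / (1 + h * u (n - 1) t))) t)
    (φ₀ : ℝ → ℝ)
    (hφ₀ : ∀ t : ℝ,
      HasDerivAt φ₀
        ((1 / (2 * h)) * (1 + h * u n₀ t - 1 / (1 + h * u (n₀ - 1) t)) * φ₀ t) t)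
    (φ : ℤ → ℝ → ℝ)
    (hφ : ∀ (n : ℤ) (t : ℝ),
      φ n t = φ₀ t * ∏ j ∈ Finset.Ico n₀ n, (1 + h * u j t)) :
    ∀ (n : ℤ) (t : ℝ), n₀ + 1 ≤ n →
      HasDerivAt (φ n) ((φ (n + 1) t - φ (n - 1) t) / (2 * h)) t :=
  burgers_to_discrete_wave_general h n₀ u hden hburgers φ₀ hφ₀ φ hφ
end

section
/- The coefficient ρ₂ of the NLS reduction of the discrete Burgers equation, ρ₂ = -[2hσ sin²(ωσ/2) sin(κh/2) / ((cos(κh) - cos(ωσ)) cos(ωσ))] · ([2cos(κh/2) - cos(3κh/2)] + i sin(κh/2)), has nonzero imaginary part whenever h, σ > 0, sin(ωσ/2) ≠ 0, sin(κh/2) ≠ 0, cos(κh) ≠ cos(ωσ), and cos(ωσ) ≠ 0. In particular ρ₂ ≠ 0, so the A₁ C-integrability condition ρ₂ = 0 fails. -/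
open Complex

theorem Complex.im_ofReal_mul_ofReal_add_I_mul (c a b : ℝ) :
    ((c : ℂ) * (a + I * b)).im = c * b := by
  simp

theorem rho2_not_real_general
    (h σ κ ω : ℝ) (hh : 0 < h) (hσ : 0 < σ)
    (hs1 : Real.sin (ω * σ / 2) ≠ 0)
    (hs2 : Real.sin (κ * h / 2) ≠ 0)
    (hc1 : Real.cos (κ * h) ≠ Real.cos (ω * σ))
    (hc2 : Real.cos (ω * σ) ≠ 0)
    (ρ₂ : ℂ)
    (hρ : ρ₂ = -((2 * h * σ * Real.sin (ω * σ / 2) ^ 2 * Real.sin (κ * h / 2)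
            / ((Real.cos (κ * h) - Real.cos (ω * σ)) * Real.cos (ω * σ)) : ℝ) : ℂ)
          * (((2 * Real.cos (κ * h / 2) - Real.cos (3 * κ * h / 2) : ℝ) : ℂ)
              + Complex.I * ((Real.sin (κ * h / 2) : ℝ) : ℂ))) :
    ρ₂.im ≠ 0 ∧ ρ₂ ≠ 0 := by
  have hprefactor : 2 * h * σ * Real.sin (ω * σ / 2) ^ 2 * Real.sin (κ * h / 2)
      / ((Real.cos (κ * h) - Real.cos (ω * σ)) * Real.cos (ω * σ)) ≠ 0 :=
    div_ne_zero (by positivity) (mul_ne_zero (sub_ne_zero.mpr hc1) hc2)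
  have him : ρ₂.im ≠ 0 := by
    rw [hρ, neg_mul, neg_im, im_ofReal_mul_ofReal_add_I_mul]
    exact neg_ne_zero.mpr (mul_ne_zero hprefactor hs2)
  exact ⟨him, fun h0 => him (by simp [h0])⟩

/-- The NLS coefficient ρ₂ of the discrete Burgers reduction has nonzero
imaginary part (so ρ₂ ≠ 0 and the A₁ C-integrability condition fails). -/
theorem rho2_not_real
    (h σ κ ω : ℝ) (hh : 0 < h) (hσ : 0 < σ)
    (hdisp : Real.sin (ω * σ) = -(σ / h) * Real.sin (κ * h))
    (hs1 : Real.sin (ω * σ / 2) ≠ 0)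
    (hs2 : Real.sin (κ * h / 2) ≠ 0)
    (hc1 : Real.cos (κ * h) ≠ Real.cos (ω * σ))
    (hc2 : Real.cos (ω * σ) ≠ 0)
    (ρ₂ : ℂ)
    (hρ : ρ₂ = -((2 * h * σ * Real.sin (ω * σ / 2) ^ 2 * Real.sin (κ * h / 2)
            / ((Real.cos (κ * h) - Real.cos (ω * σ)) * Real.cos (ω * σ)) : ℝ) : ℂ)
          * (((2 * Real.cos (κ * h / 2) - Real.cos (3 * κ * h / 2) : ℝ) : ℂ)
              + Complex.I * ((Real.sin (κ * h / 2) : ℝ) : ℂ))) :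
    ρ₂.im ≠ 0 ∧ ρ₂ ≠ 0 :=
  rho2_not_real_general h σ κ ω hh hσ hs1 hs2 hc1 hc2 ρ₂ hρ
end
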